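/- arXiv:2605.10205 — 2 statements merged into one kernel-verified Lean document; each statement's English description precedes it below -/
import Mathlib

section
/- Assume f is L-Lipschitz and β-smooth (no convexity is assumed), P is a gossip matrix with spectral bound λ ∈ [0, 1), and η_t = η > 0 for all t. Let w̄_avg = (1/(T+1)) ∑_{t=1}^{T+1} w̄^t and v̄_avg = (1/(T+1)) ∑_{t=1}^{T+1} v̄^t. Then for every z ∈ 𝒵, |f(w̄_avg; z) − f(v̄_avg; z)| ≤ 4L² (1 + βη)^{T+1} / ((1−λ) β (T+1)) + (2ηL²/(m(T+1))) ∑_{t=1}^{T+1} ∑_{s=1}^{t−1} (1 + βη)^{t−1−s} 𝟙[j_s(r)=k]. -/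
/-!
The two runs start together, so the ℓ¹ distance `d t = ∑ᵢ ‖w t i - v t i‖` between them vanishes
at `t = 1`. A gossip step with a doubly stochastic matrix does not increase `d`, and a gradient
step multiplies it by at most `1 + βη`, except that the single differing sample adds at most
`2ηL` whenever machine `r` draws index `k`. Unrolling this recursion and averaging gives the
second term of the bound by `L`-Lipschitzness; the first term is nonnegative slack.
-/

open Finset

section Gossip

variable {ι E : Type*} [Fintype ι] [SeminormedAddCommGroup E] [NormedSpace ℝ E]

theorem sum_norm_gossip_le (P : ι → ι → ℝ) (hP : ∀ i l, 0 ≤ P i l)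
    (hcol : ∀ l, ∑ i, P i l = 1) (x : ι → E) :
    ∑ i, ‖∑ l, P i l • x l‖ ≤ ∑ l, ‖x l‖ :=
  calc ∑ i, ‖∑ l, P i l • x l‖ ≤ ∑ i, ∑ l, P i l * ‖x l‖ := by
        gcongr with i
        refine (norm_sum_le _ _).trans_eq (sum_congr rfl fun l _ => ?_)
        rw [norm_smul, Real.norm_of_nonneg (hP i l)]
    _ = ∑ l, ‖x l‖ := by
        rw [sum_comm]
        simp only [← sum_mul, hcol, one_mul]

theorem sum_norm_gossip_step_sub_le (P : ι → ι → ℝ) (hP : ∀ i l, 0 ≤ P i l)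
    (hcol : ∀ l, ∑ i, P i l = 1) {β η : ℝ} (hη : 0 ≤ η) (x y gx gy : ι → E) (e : ι → ℝ)
    (hg : ∀ i, ‖gx i - gy i‖ ≤ β * ‖x i - y i‖ + e i) :
    ∑ i, ‖(∑ l, P i l • x l - η • gx i) - (∑ l, P i l • y l - η • gy i)‖ ≤
      (1 + β * η) * ∑ i, ‖x i - y i‖ + η * ∑ i, e i := by
  have hsplit : ∀ i, (∑ l, P i l • x l - η • gx i) - (∑ l, P i l • y l - η • gy i) =
      ∑ l, P i l • (x l - y l) - η • (gx i - gy i) := fun i => by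
    simp only [smul_sub, sum_sub_distrib]
    abel
  calc ∑ i, ‖(∑ l, P i l • x l - η • gx i) - (∑ l, P i l • y l - η • gy i)‖
      ≤ ∑ i, (‖∑ l, P i l • (x l - y l)‖ + η * (β * ‖x i - y i‖ + e i)) := by
        gcongr with i
        rw [hsplit]
        refine (norm_sub_le _ _).trans ?_
        rw [norm_smul, Real.norm_of_nonneg hη]
        gcongr
        exact hg i
    _ ≤ ∑ i, ‖x i - y i‖ + ∑ i, η * (β * ‖x i - y i‖ + e i) := by
        rw [sum_add_distrib]
        exact add_le_add (sum_norm_gossip_le P hP hcol _) le_rfl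
    _ = (1 + β * η) * ∑ i, ‖x i - y i‖ + η * ∑ i, e i := by
        simp only [mul_add, sum_add_distrib, ← mul_sum]
        ring

end Gossip

theorem sum_Icc_pow_sub_mul_succ (a : ℝ) (b : ℕ → ℝ) {t : ℕ} (ht : 1 ≤ t) :
    ∑ s ∈ Icc 1 t, a ^ (t - s) * b s = a * ∑ s ∈ Icc 1 (t - 1), a ^ (t - 1 - s) * b s + b t := by
  obtain ⟨n, rfl⟩ : ∃ n, t = n + 1 := ⟨t - 1, by omega⟩
  rw [sum_Icc_succ_top (by omega), Nat.sub_self, pow_zero, one_mul, Nat.add_sub_cancel, mul_sum]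
  congr 1
  refine sum_congr rfl fun s hs => ?_
  rw [show n + 1 - s = n - s + 1 by have := (mem_Icc.mp hs).2; omega, pow_succ]
  ring

/-- Discrete Grönwall inequality. -/
theorem le_sum_pow_mul_of_le_mul_add {a : ℝ} {b d : ℕ → ℝ} {T : ℕ} (ha : 0 ≤ a) (h1 : d 1 = 0)
    (hstep : ∀ t, 1 ≤ t → t ≤ T → d (t + 1) ≤ a * d t + b t) :
    ∀ t, 1 ≤ t → t ≤ T + 1 → d t ≤ ∑ s ∈ Icc 1 (t - 1), a ^ (t - 1 - s) * b s := by
  intro t ht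
  induction t, ht using Nat.le_induction with
  | base => simp [h1]
  | succ t ht ih =>
    intro htT
    rw [Nat.add_sub_cancel, sum_Icc_pow_sub_mul_succ a b ht]
    calc d (t + 1) ≤ a * d t + b t := hstep t ht (by omega)
      _ ≤ _ := by gcongr; exact ih (by omega)

theorem norm_smul_sum_sub_smul_sum_le {ι E : Type*} [SeminormedAddCommGroup E] [NormedSpace ℝ E]
    {a : ℝ} (ha : 0 ≤ a) (s : Finset ι) (x y : ι → E) :
    ‖a • ∑ i ∈ s, x i - a • ∑ i ∈ s, y i‖ ≤ a * ∑ i ∈ s, ‖x i - y i‖ := by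
  rw [← smul_sub, ← sum_sub_distrib, norm_smul, Real.norm_of_nonneg ha]
  exact mul_le_mul_of_nonneg_left (norm_sum_le _ _) ha

theorem norm_smul_sum_smul_sum_sub_le {ι κ E : Type*} [Fintype κ] [SeminormedAddCommGroup E]
    [NormedSpace ℝ E] {a b : ℝ} (ha : 0 ≤ a) (hb : 0 ≤ b) (s : Finset ι) (x y : ι → κ → E) :
    ‖a • ∑ t ∈ s, b • ∑ i, x t i - a • ∑ t ∈ s, b • ∑ i, y t i‖ ≤
      a * ∑ t ∈ s, b * ∑ i, ‖x t i - y t i‖ := by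
  refine (norm_smul_sum_sub_smul_sum_le ha _ _ _).trans ?_
  gcongr with t
  exact norm_smul_sum_sub_smul_sum_le hb _ _ _

theorem norm_sub_le_of_smooth_of_bounded {Z H : Type*} [SeminormedAddCommGroup H]
    (f' : Z → H → H) {L β : ℝ} (hβ : 0 ≤ β) (hgradbd : ∀ z x, ‖f' z x‖ ≤ L)
    (hsmooth : ∀ z x y, ‖f' z x - f' z y‖ ≤ β * ‖x - y‖) {z z' : Z} (p : Prop) [Decidable p]
    (hz : ¬p → z' = z) (x y : H) :
    ‖f' z x - f' z' y‖ ≤ β * ‖x - y‖ + if p then 2 * L else 0 := by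
  by_cases hp : p
  · rw [if_pos hp]
    linarith [norm_sub_le (f' z x) (f' z' y), hgradbd z x, hgradbd z' y,
      mul_nonneg hβ (norm_nonneg (x - y))]
  · rw [if_neg hp, add_zero, hz hp]
    exact hsmooth z x y

theorem dsgd_stability_nonconvex_averaged_general
    {H : Type*} [NormedAddCommGroup H] [InnerProductSpace ℝ H]
    {Z : Type*} (f : Z → H → ℝ) (f' : Z → H → H)
    (L β : ℝ) (hL : 0 < L) (hβ : 0 < β)
    (hlip : ∀ (z : Z) (x y : H), |f z x - f z y| ≤ L * ‖x - y‖)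
    (hgradbd : ∀ (z : Z) (x : H), ‖f' z x‖ ≤ L)
    (hsmooth : ∀ (z : Z) (x y : H), ‖f' z x - f' z y‖ ≤ β * ‖x - y‖)
    (m n T : ℕ)
    (P : Fin m → Fin m → ℝ)
    (hPsym : ∀ i l, P i l = P l i)
    (hPpos : ∀ i l, 0 ≤ P i l)
    (hProw : ∀ i, ∑ l, P i l = 1)
    (lam : ℝ) (hlam1 : lam < 1)
    (r : Fin m) (k : Fin n)
    (S S' : Fin m → Fin n → Z)
    (hSS' : ∀ (r' : Fin m) (k' : Fin n), (r', k') ≠ (r, k) → S' r' k' = S r' k')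
    (j : ℕ → Fin m → Fin n)
    (η : ℝ) (hη0 : 0 < η)
    (w₀ : H) (w v : ℕ → Fin m → H)
    (hw1 : ∀ i, w 1 i = w₀) (hv1 : ∀ i, v 1 i = w₀)
    (hwrec : ∀ t, 1 ≤ t → t ≤ T → ∀ i,
      w (t + 1) i = ∑ l, P i l • w t l - η • f' (S i (j t i)) (w t i))
    (hvrec : ∀ t, 1 ≤ t → t ≤ T → ∀ i,
      v (t + 1) i = ∑ l, P i l • v t l - η • f' (S' i (j t i)) (v t i))
    :
    ∀ z : Z,
      |f z (((T : ℝ) + 1)⁻¹ • ∑ t ∈ Finset.Icc 1 (T + 1), (m : ℝ)⁻¹ • ∑ i, w t i) -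
          f z (((T : ℝ) + 1)⁻¹ • ∑ t ∈ Finset.Icc 1 (T + 1), (m : ℝ)⁻¹ • ∑ i, v t i)| ≤
        4 * L ^ 2 * (1 + β * η) ^ (T + 1) / ((1 - lam) * β * ((T : ℝ) + 1))
          + 2 * η * L ^ 2 / (m * ((T : ℝ) + 1)) *
            ∑ t ∈ Finset.Icc 1 (T + 1), ∑ s ∈ Finset.Icc 1 (t - 1),
              (1 + β * η) ^ (t - 1 - s) * (if j s r = k then (1 : ℝ) else 0) := by
  intro z
  have hcol : ∀ l, ∑ i, P i l = 1 := fun l => by simpa only [hPsym l] using hProw l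
  have hstep : ∀ t, 1 ≤ t → t ≤ T → ∑ i, ‖w (t + 1) i - v (t + 1) i‖ ≤
      (1 + β * η) * ∑ i, ‖w t i - v t i‖ + 2 * η * L * (if j t r = k then 1 else 0) := by
    intro t ht htT
    simp only [hwrec t ht htT, hvrec t ht htT]
    have hgrad := fun i => norm_sub_le_of_smooth_of_bounded f' hβ.le hgradbd hsmooth
      (i = r ∧ j t i = k) (hSS' i (j t i) ∘ mt Prod.mk.inj) (w t i) (v t i)
    refine (sum_norm_gossip_step_sub_le P hPpos hcol hη0.le _ _ _ _ _ hgrad).trans_eq ?_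
    simp only [ite_and, sum_ite_eq', mem_univ, if_true]
    split_ifs <;> ring
  have hdist := le_sum_pow_mul_of_le_mul_add (d := fun t => ∑ i, ‖w t i - v t i‖)
    (by positivity) (by simp [hw1, hv1]) hstep
  have hslack : 0 ≤ 4 * L ^ 2 * (1 + β * η) ^ (T + 1) / ((1 - lam) * β * ((T : ℝ) + 1)) := by
    have : 0 < 1 - lam := by linarith
    positivity
  refine (hlip z _ _).trans (le_add_of_nonneg_of_le hslack ?_)
  calc L * ‖((T : ℝ) + 1)⁻¹ • ∑ t ∈ Icc 1 (T + 1), (m : ℝ)⁻¹ • ∑ i, w t i -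
        ((T : ℝ) + 1)⁻¹ • ∑ t ∈ Icc 1 (T + 1), (m : ℝ)⁻¹ • ∑ i, v t i‖
      ≤ L * (((T : ℝ) + 1)⁻¹ * ∑ t ∈ Icc 1 (T + 1), (m : ℝ)⁻¹ * ∑ i, ‖w t i - v t i‖) := by
        gcongr
        exact norm_smul_sum_smul_sum_sub_le (by positivity) (by positivity) _ _ _
    _ ≤ L * (((T : ℝ) + 1)⁻¹ * ∑ t ∈ Icc 1 (T + 1), (m : ℝ)⁻¹ * ∑ s ∈ Icc 1 (t - 1),
          (1 + β * η) ^ (t - 1 - s) * (2 * η * L * (if j s r = k then 1 else 0))) := by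
        gcongr with t ht
        exact hdist t (mem_Icc.mp ht).1 (mem_Icc.mp ht).2
    _ = _ := by
        simp only [mul_sum]
        refine sum_congr rfl fun t _ => sum_congr rfl fun s _ => ?_
        rw [div_eq_mul_inv, mul_inv]
        ring

/-- non-convex case, constant stepsize, averaged iterates. -/
theorem dsgd_stability_nonconvex_averaged
    {H : Type*} [NormedAddCommGroup H] [InnerProductSpace ℝ H]
    {Z : Type*} (f : Z → H → ℝ) (f' : Z → H → H)
    (L β : ℝ) (hL : 0 < L) (hβ : 0 < β)
    (hdiff : ∀ (z : Z) (x : H), HasFDerivAt (f z) ((innerSL ℝ) (f' z x)) x)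
    (hlip : ∀ (z : Z) (x y : H), |f z x - f z y| ≤ L * ‖x - y‖)
    (hgradbd : ∀ (z : Z) (x : H), ‖f' z x‖ ≤ L)
    (hsmooth : ∀ (z : Z) (x y : H), ‖f' z x - f' z y‖ ≤ β * ‖x - y‖)
    (m n T : ℕ) (hm : 1 ≤ m) (hn : 1 ≤ n) (hT : 1 ≤ T)
    (P : Fin m → Fin m → ℝ)
    (hPsym : ∀ i l, P i l = P l i)
    (hPpos : ∀ i l, 0 ≤ P i l)
    (hProw : ∀ i, ∑ l, P i l = 1)
    (lam : ℝ) (hlam0 : 0 ≤ lam) (hlam1 : lam < 1)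
    (hspec : ∀ vv : Fin m → H, ∑ i, vv i = 0 →
      Real.sqrt (∑ i, ‖∑ l, P i l • vv l‖ ^ 2) ≤ lam * Real.sqrt (∑ i, ‖vv i‖ ^ 2))
    (r : Fin m) (k : Fin n)
    (S S' : Fin m → Fin n → Z)
    (hSS' : ∀ (r' : Fin m) (k' : Fin n), (r', k') ≠ (r, k) → S' r' k' = S r' k')
    (j : ℕ → Fin m → Fin n)
    (η : ℝ) (hη0 : 0 < η)
    (w₀ : H) (w v : ℕ → Fin m → H)
    (hw1 : ∀ i, w 1 i = w₀) (hv1 : ∀ i, v 1 i = w₀)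
    (hwrec : ∀ t, 1 ≤ t → t ≤ T → ∀ i,
      w (t + 1) i = ∑ l, P i l • w t l - η • f' (S i (j t i)) (w t i))
    (hvrec : ∀ t, 1 ≤ t → t ≤ T → ∀ i,
      v (t + 1) i = ∑ l, P i l • v t l - η • f' (S' i (j t i)) (v t i))
    :
    ∀ z : Z,
      |f z (((T : ℝ) + 1)⁻¹ • ∑ t ∈ Finset.Icc 1 (T + 1), (m : ℝ)⁻¹ • ∑ i, w t i) -
          f z (((T : ℝ) + 1)⁻¹ • ∑ t ∈ Finset.Icc 1 (T + 1), (m : ℝ)⁻¹ • ∑ i, v t i)| ≤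
        4 * L ^ 2 * (1 + β * η) ^ (T + 1) / ((1 - lam) * β * ((T : ℝ) + 1))
          + 2 * η * L ^ 2 / (m * ((T : ℝ) + 1)) *
            ∑ t ∈ Finset.Icc 1 (T + 1), ∑ s ∈ Finset.Icc 1 (t - 1),
              (1 + β * η) ^ (t - 1 - s) * (if j s r = k then (1 : ℝ) else 0) :=
  dsgd_stability_nonconvex_averaged_general f f' L β hL hβ hlip hgradbd hsmooth m n T P hPsym hPpos
    hProw lam hlam1 r k S S' hSS' j η hη0 w₀ w v hw1 hv1 hwrec hvrec
end

section
/- Assume f is convex, L-Lipschitz and β-smooth, and for every t ∈ {1,…,T} and i ∈ {1,…,m} the diagonal entries satisfy P^t_{ii} > 0 and η_t ≤ 2P^t_{ii}/β. Then the r-th local model of time-varying D-SGD satisfies, for every z ∈ 𝒵, |f(w^{T+1}(r); z) − f(v^{T+1}(r); z)| ≤ 2L² ∑_{t=1}^T Q^{(t)}_{rr} η_t 𝟙[j_t(r)=k], where Q^{(t)} = P^T P^{T−1} ⋯ P^{t+1} (with Q^{(T)} the identity matrix). -/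
/-
Couple the two runs and track the deviations `δₜ(i) = ‖wᵗ(i) - vᵗ(i)‖`. If machine `i` does not
draw the perturbed sample at step `t`, both runs take a gradient step on the same convex β-smooth
loss; co-coercivity `‖∇g x - ∇g y‖² ≤ β ⟪∇g x - ∇g y, x - y⟫` makes
`x ↦ Pᵗᵢᵢ x - ηₜ ∇g x` a `Pᵗᵢᵢ`-Lipschitz map as soon as `ηₜ ≤ 2 Pᵗᵢᵢ / β`, so
`δₜ₊₁(i) ≤ ∑ₗ Pᵗᵢₗ δₜ(l)`. Otherwise the two gradients differ by at most `2L`. Hence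
`δₜ₊₁ ≤ Pᵗ δₜ + 2 L ηₜ 𝟙[jₜ(r) = k] e_r` componentwise, and unrolling this inequality between
nonnegative matrices gives `δ_{T+1}(r) ≤ 2 L ∑ₜ Q⁽ᵗ⁾ᵣᵣ ηₜ 𝟙[jₜ(r) = k]`; the Lipschitz bound on `f`
finishes.
-/

/-- Backward matrix product `Q^{(t)} = P^T · P^{T-1} · ⋯ · P^{t+1}`
(the identity matrix when `t = T`). -/
noncomputable def backProd {m : ℕ} (P : ℕ → Matrix (Fin m) (Fin m) ℝ) (T t : ℕ) :
    Matrix (Fin m) (Fin m) ℝ :=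
  (((List.range' (t + 1) (T - t)).reverse.map P).prod)

open Set RealInnerProductSpace Matrix

theorem norm_sum_smul_le_sum_mul_norm {E ι : Type*} [SeminormedAddCommGroup E] [NormedSpace ℝ E]
    (s : Finset ι) {p : ι → ℝ} (hp : ∀ l, 0 ≤ p l) (d : ι → E) :
    ‖∑ l ∈ s, p l • d l‖ ≤ ∑ l ∈ s, p l * ‖d l‖ :=
  (norm_sum_le _ _).trans_eq (Finset.sum_congr rfl fun l _ => norm_smul_of_nonneg (hp l) _)

section Gradient

variable {H : Type*} [NormedAddCommGroup H] [InnerProductSpace ℝ H] {g : H → ℝ} {g' : H → H}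
  {β : ℝ}

theorem hasDerivAt_comp_add_smul (hg : ∀ x, HasFDerivAt g (innerSL ℝ (g' x)) x) (x d : H)
    (t : ℝ) : HasDerivAt (fun s : ℝ => g (x + s • d)) ⟪g' (x + t • d), d⟫ t := by
  have hline : HasDerivAt (fun s : ℝ => x + s • d) d t := by
    simpa using ((hasDerivAt_id t).smul_const d).const_add x
  simpa [Function.comp_def] using (hg (x + t • d)).comp_hasDerivAt t hline

theorem le_add_inner_add_sq_of_lipschitz_gradient
    (hg : ∀ x, HasFDerivAt g (innerSL ℝ (g' x)) x) (hg' : ∀ x y, ‖g' x - g' y‖ ≤ β * ‖x - y‖)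
    (x u : H) : g u ≤ g x + ⟪g' x, u - x⟫ + β / 2 * ‖u - x‖ ^ 2 := by
  set d := u - x
  let ψ : ℝ → ℝ := fun t => g (x + t • d) - t * ⟪g' x, d⟫ - β / 2 * t ^ 2 * ‖d‖ ^ 2
  have hψ (t : ℝ) : HasDerivAt ψ (⟪g' (x + t • d), d⟫ - ⟪g' x, d⟫ - β * t * ‖d‖ ^ 2) t := by
    have h := ((hasDerivAt_comp_add_smul hg x d t).sub
      ((hasDerivAt_id t).mul_const ⟪g' x, d⟫)).sub
      (((hasDerivAt_pow 2 t).const_mul (β / 2)).mul_const (‖d‖ ^ 2))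
    exact h.congr_deriv (by ring)
  have hψ' (t : ℝ) (ht : 0 < t) :
      ⟪g' (x + t • d), d⟫ - ⟪g' x, d⟫ - β * t * ‖d‖ ^ 2 ≤ 0 := by
    have := hg' (x + t • d) x
    rw [add_sub_cancel_left, norm_smul, Real.norm_of_nonneg ht.le] at this
    refine sub_nonpos.2 ?_
    calc ⟪g' (x + t • d), d⟫ - ⟪g' x, d⟫ = ⟪g' (x + t • d) - g' x, d⟫ := (inner_sub_left ..).symm
      _ ≤ ‖g' (x + t • d) - g' x‖ * ‖d‖ := real_inner_le_norm _ _
      _ ≤ β * (t * ‖d‖) * ‖d‖ := by gcongr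
      _ = β * t * ‖d‖ ^ 2 := by ring
  have hanti : AntitoneOn ψ (Icc 0 1) :=
    antitoneOn_of_hasDerivWithinAt_nonpos (convex_Icc 0 1)
      (fun t _ => (hψ t).continuousAt.continuousWithinAt)
      (fun t _ => (hψ t).hasDerivWithinAt)
      (fun t ht => hψ' t (by rw [interior_Icc] at ht; exact ht.1))
  have h01 := hanti (left_mem_Icc.2 zero_le_one) (right_mem_Icc.2 zero_le_one) zero_le_one
  simp only [ψ, d, zero_smul, add_zero, one_smul, zero_mul, sub_zero, one_pow, mul_one,
    add_sub_cancel, ne_eq, OfNat.ofNat_ne_zero, not_false_eq_true, zero_pow, mul_zero] at h01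
  linarith

theorem ConvexOn.add_inner_sub_le (hconv : ConvexOn ℝ univ g)
    (hg : ∀ x, HasFDerivAt g (innerSL ℝ (g' x)) x) (y u : H) : g y + ⟪g' y, u - y⟫ ≤ g u := by
  have hline : ConvexOn ℝ univ (fun t : ℝ => g (y + t • (u - y))) := by
    simpa [Function.comp_def, AffineMap.lineMap_apply, add_comm] using
      hconv.comp_affineMap (AffineMap.lineMap y u)
  have := hline.le_slope_of_hasDerivAt (mem_univ 0) (mem_univ 1) one_pos
    (by simpa using hasDerivAt_comp_add_smul hg y (u - y) 0)
  simp only [slope_def_field, one_smul, add_sub_cancel, zero_smul, add_zero, sub_zero,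
    div_one] at this
  linarith

theorem ConvexOn.sub_le_inner_sub_sq_norm_gradient_sub (hconv : ConvexOn ℝ univ g)
    (hg : ∀ x, HasFDerivAt g (innerSL ℝ (g' x)) x) (hg' : ∀ x y, ‖g' x - g' y‖ ≤ β * ‖x - y‖)
    (hβ : 0 < β) (x y : H) :
    g y - g x ≤ ⟪g' y, y - x⟫ - ‖g' x - g' y‖ ^ 2 / (2 * β) := by
  -- compare both first-order bounds at the gradient step `u = x - β⁻¹ • (g' x - g' y)`
  set Δ := g' x - g' y
  have hdesc := le_add_inner_add_sq_of_lipschitz_gradient hg hg' x (x - β⁻¹ • Δ)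
  have hconv := hconv.add_inner_sub_le hg y (x - β⁻¹ • Δ)
  rw [sub_sub_cancel_left, norm_neg, norm_smul, inner_neg_right, real_inner_smul_right,
    Real.norm_of_nonneg (inv_nonneg.2 hβ.le)] at hdesc
  rw [sub_right_comm, inner_sub_right, real_inner_smul_right] at hconv
  have hΔ : ‖Δ‖ ^ 2 = ⟪g' x, Δ⟫ - ⟪g' y, Δ⟫ := by
    rw [← real_inner_self_eq_norm_sq, inner_sub_left]
  have hxy : ⟪g' y, x - y⟫ = -⟪g' y, y - x⟫ := by rw [← inner_neg_right, neg_sub]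
  have hquad : β / 2 * (β⁻¹ * ‖Δ‖) ^ 2 = ‖Δ‖ ^ 2 / (2 * β) := by field_simp
  have hlin : β⁻¹ * ⟪g' x, Δ⟫ - β⁻¹ * ⟪g' y, Δ⟫ = 2 * (‖Δ‖ ^ 2 / (2 * β)) := by
    rw [← mul_sub, ← hΔ]; field_simp
  linarith

theorem ConvexOn.sq_norm_gradient_sub_le_inner (hconv : ConvexOn ℝ univ g)
    (hg : ∀ x, HasFDerivAt g (innerSL ℝ (g' x)) x) (hg' : ∀ x y, ‖g' x - g' y‖ ≤ β * ‖x - y‖)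
    (hβ : 0 < β) (x y : H) : ‖g' x - g' y‖ ^ 2 ≤ β * ⟪g' x - g' y, x - y⟫ := by
  have hxy := hconv.sub_le_inner_sub_sq_norm_gradient_sub hg hg' hβ x y
  have hyx := hconv.sub_le_inner_sub_sq_norm_gradient_sub hg hg' hβ y x
  rw [norm_sub_rev] at hyx
  have : ⟪g' x - g' y, x - y⟫ = ⟪g' y, y - x⟫ + ⟪g' x, x - y⟫ := by
    rw [inner_sub_left, ← neg_sub x y, inner_neg_right]; ring
  have hhalf : ‖g' x - g' y‖ ^ 2 / β = 2 * (‖g' x - g' y‖ ^ 2 / (2 * β)) := by field_simp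
  rw [this, ← div_le_iff₀' hβ, hhalf]
  linarith

theorem norm_smul_sub_smul_le_of_sq_norm_le_inner {p η : ℝ} (hβ : 0 < β) (hp : 0 ≤ p)
    (hη : 0 ≤ η) (hηβ : η * β ≤ 2 * p) {d Δ : H} (hΔ : ‖Δ‖ ^ 2 ≤ β * ⟪Δ, d⟫) :
    ‖p • d - η • Δ‖ ≤ p * ‖d‖ := by
  have hinner : 0 ≤ ⟪Δ, d⟫ := nonneg_of_mul_nonneg_right ((sq_nonneg _).trans hΔ) hβ
  refine le_of_sq_le_sq ?_ (by positivity)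
  rw [norm_sub_sq_real, norm_smul, norm_smul, Real.norm_of_nonneg hp, Real.norm_of_nonneg hη,
    real_inner_smul_left, real_inner_smul_right, real_inner_comm]
  nlinarith [mul_le_mul_of_nonneg_left hΔ (mul_nonneg hη hη),
    mul_le_mul_of_nonneg_right hηβ (mul_nonneg hη hinner)]

theorem ConvexOn.norm_smul_sub_smul_gradient_sub_le (hconv : ConvexOn ℝ univ g)
    (hg : ∀ x, HasFDerivAt g (innerSL ℝ (g' x)) x) (hg' : ∀ x y, ‖g' x - g' y‖ ≤ β * ‖x - y‖)
    (hβ : 0 < β) {p η : ℝ} (hp : 0 ≤ p) (hη : 0 ≤ η) (hηβ : η ≤ 2 * p / β) (x y : H) :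
    ‖p • (x - y) - η • (g' x - g' y)‖ ≤ p * ‖x - y‖ :=
  norm_smul_sub_smul_le_of_sq_norm_le_inner hβ hp hη ((le_div_iff₀ hβ).1 hηβ)
    (hconv.sq_norm_gradient_sub_le_inner hg hg' hβ x y)

section GossipStep

variable {ι : Type*} [Fintype ι] {p : ι → ℝ} {η : ℝ} (x y : ι → H)

theorem norm_sum_smul_sub_smul_sub_le (hp : ∀ l, 0 ≤ p l) (hη : 0 ≤ η) {L : ℝ} {a b : H}
    (ha : ‖a‖ ≤ L) (hb : ‖b‖ ≤ L) :
    ‖(∑ l, p l • x l - η • a) - (∑ l, p l • y l - η • b)‖ ≤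
      ∑ l, p l * ‖x l - y l‖ + 2 * L * η := by
  have hsplit : (∑ l, p l • x l - η • a) - (∑ l, p l • y l - η • b) =
      ∑ l, p l • (x l - y l) - η • (a - b) := by
    simp only [smul_sub, Finset.sum_sub_distrib]; abel
  rw [hsplit]
  refine (norm_sub_le _ _).trans (add_le_add (norm_sum_smul_le_sum_mul_norm _ hp _) ?_)
  rw [norm_smul_of_nonneg hη]
  nlinarith [norm_sub_le a b]

theorem ConvexOn.norm_sum_smul_sub_smul_gradient_sub_le [DecidableEq ι]
    (hconv : ConvexOn ℝ univ g) (hg : ∀ x, HasFDerivAt g (innerSL ℝ (g' x)) x)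
    (hg' : ∀ x y, ‖g' x - g' y‖ ≤ β * ‖x - y‖) (hβ : 0 < β) (hp : ∀ l, 0 ≤ p l) (hη : 0 ≤ η)
    {i : ι} (hηβ : η ≤ 2 * p i / β) :
    ‖(∑ l, p l • x l - η • g' (x i)) - (∑ l, p l • y l - η • g' (y i))‖ ≤
      ∑ l, p l * ‖x l - y l‖ := by
  have hsplit : (∑ l, p l • x l - η • g' (x i)) - (∑ l, p l • y l - η • g' (y i)) =
      (p i • (x i - y i) - η • (g' (x i) - g' (y i))) +
        ∑ l ∈ Finset.univ.erase i, p l • (x l - y l) := by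
    rw [← Finset.add_sum_erase _ (fun l => p l • x l) (Finset.mem_univ i),
      ← Finset.add_sum_erase _ (fun l => p l • y l) (Finset.mem_univ i)]
    simp only [smul_sub, Finset.sum_sub_distrib]; abel
  rw [hsplit, ← Finset.add_sum_erase _ _ (Finset.mem_univ i)]
  exact (norm_add_le _ _).trans (add_le_add
    (hconv.norm_smul_sub_smul_gradient_sub_le hg hg' hβ (hp i) hη hηβ _ _)
    (norm_sum_smul_le_sum_mul_norm _ hp _))

end GossipStep

end Gradient

section BackProd

variable {m : ℕ} (P : ℕ → Matrix (Fin m) (Fin m) ℝ)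

theorem backProd_self (t : ℕ) : backProd P t t = 1 := by
  simp [backProd]

theorem backProd_succ_left {T s : ℕ} (h : s ≤ T) :
    backProd P (T + 1) s = P (T + 1) * backProd P T s := by
  rw [backProd, show T + 1 - s = T - s + 1 by omega, List.range'_concat,
    show s + 1 + 1 * (T - s) = T + 1 by omega, List.reverse_append]
  simp [backProd]

end BackProd

theorem le_sum_backProd_mulVec {m T : ℕ} {P : ℕ → Matrix (Fin m) (Fin m) ℝ}
    (hP : ∀ t, 1 ≤ t → t ≤ T → ∀ i l, 0 ≤ P t i l)
    {e c : ℕ → Fin m → ℝ} (he : e 1 ≤ 0)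
    (hrec : ∀ t, 1 ≤ t → t ≤ T → e (t + 1) ≤ P t *ᵥ e t + c t) :
    ∀ t ≤ T, e (t + 1) ≤ ∑ s ∈ Finset.Icc 1 t, backProd P t s *ᵥ c s := by
  intro t
  induction t with
  | zero => intro _; simpa using he
  | succ t ih =>
    intro ht
    have hmono : P (t + 1) *ᵥ e (t + 1) ≤
        P (t + 1) *ᵥ ∑ s ∈ Finset.Icc 1 t, backProd P t s *ᵥ c s := fun i =>
      dotProduct_le_dotProduct_of_nonneg_left (ih (by omega)) (hP (t + 1) (by omega) ht i)
    calc e (t + 1 + 1) ≤ P (t + 1) *ᵥ e (t + 1) + c (t + 1) := hrec (t + 1) (by omega) ht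
      _ ≤ P (t + 1) *ᵥ (∑ s ∈ Finset.Icc 1 t, backProd P t s *ᵥ c s) + c (t + 1) := by
        gcongr
      _ = ∑ s ∈ Finset.Icc 1 (t + 1), backProd P (t + 1) s *ᵥ c s := by
        rw [Finset.sum_Icc_succ_top (by omega), backProd_self, Matrix.one_mulVec,
          Matrix.mulVec_sum]
        congr 1
        refine Finset.sum_congr rfl fun s hs => ?_
        rw [Matrix.mulVec_mulVec, backProd_succ_left P (Finset.mem_Icc.1 hs).2]

theorem dsgd_local_stability_convex_general
    {H : Type*} [NormedAddCommGroup H] [InnerProductSpace ℝ H]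
    {Z : Type*} (f : Z → H → ℝ) (f' : Z → H → H)
    (L β : ℝ) (hL : 0 < L) (hβ : 0 < β)
    (hdiff : ∀ (z : Z) (x : H), HasFDerivAt (f z) ((innerSL ℝ) (f' z x)) x)
    (hlip : ∀ (z : Z) (x y : H), |f z x - f z y| ≤ L * ‖x - y‖)
    (hgradbd : ∀ (z : Z) (x : H), ‖f' z x‖ ≤ L)
    (hsmooth : ∀ (z : Z) (x y : H), ‖f' z x - f' z y‖ ≤ β * ‖x - y‖)
    (hconv : ∀ z : Z, ConvexOn ℝ Set.univ (f z))
    (m n T : ℕ)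
    (P : ℕ → Matrix (Fin m) (Fin m) ℝ)
    (hPpos : ∀ t, 1 ≤ t → t ≤ T → ∀ i l, 0 ≤ P t i l)
    (r : Fin m) (k : Fin n)
    (S S' : Fin m → Fin n → Z)
    (hSS' : ∀ (r' : Fin m) (k' : Fin n), (r', k') ≠ (r, k) → S' r' k' = S r' k')
    (j : ℕ → Fin m → Fin n)
    (η : ℕ → ℝ) (hηpos : ∀ t, 1 ≤ t → t ≤ T → 0 < η t)
    (hstep : ∀ t, 1 ≤ t → t ≤ T → ∀ i, 0 < P t i i ∧ η t ≤ 2 * P t i i / β)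
    (w₀ : H) (w v : ℕ → Fin m → H)
    (hw1 : ∀ i, w 1 i = w₀) (hv1 : ∀ i, v 1 i = w₀)
    (hwrec : ∀ t, 1 ≤ t → t ≤ T → ∀ i,
      w (t + 1) i = ∑ l, P t i l • w t l - η t • f' (S i (j t i)) (w t i))
    (hvrec : ∀ t, 1 ≤ t → t ≤ T → ∀ i,
      v (t + 1) i = ∑ l, P t i l • v t l - η t • f' (S' i (j t i)) (v t i))
    :
    ∀ z : Z,
      |f z (w (T + 1) r) - f z (v (T + 1) r)| ≤
        2 * L ^ 2 * ∑ t ∈ Finset.Icc 1 T, (backProd P T t) r r * η t * (if j t r = k then (1 : ℝ) else 0) := by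
  intro z
  set χ : ℕ → ℝ := fun t => if j t r = k then 1 else 0
  have step : ∀ t, 1 ≤ t → t ≤ T →
      (fun i => ‖w (t + 1) i - v (t + 1) i‖) ≤
        (P t *ᵥ fun i => ‖w t i - v t i‖) + Pi.single r (2 * L * η t * χ t) := by
    intro t ht₁ htT i
    have hη := (hηpos t ht₁ htT).le
    simp only [Pi.add_apply, mulVec, dotProduct]
    rw [hwrec t ht₁ htT i, hvrec t ht₁ htT i]
    by_cases hc : (i, j t i) = (r, k)
    · obtain ⟨rfl, hj⟩ := Prod.mk_inj.1 hc
      simp only [χ, hj, Pi.single_eq_same, if_true, mul_one]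
      exact norm_sum_smul_sub_smul_sub_le (w t) (v t) (hPpos t ht₁ htT i) hη
        (hgradbd _ _) (hgradbd _ _)
    · rw [hSS' i _ hc]
      refine ((hconv _).norm_sum_smul_sub_smul_gradient_sub_le (w t) (v t) (hdiff _) (hsmooth _)
        hβ (hPpos t ht₁ htT i) hη (hstep t ht₁ htT i).2).trans (le_add_of_nonneg_right ?_)
      rw [Pi.single_apply]
      split_ifs <;> positivity
  have hδ := le_sum_backProd_mulVec (e := fun t i => ‖w t i - v t i‖)
    (c := fun t => Pi.single r (2 * L * η t * χ t)) hPpos (fun i => by simp [hw1, hv1]) step T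
    le_rfl r
  calc |f z (w (T + 1) r) - f z (v (T + 1) r)| ≤ L * ‖w (T + 1) r - v (T + 1) r‖ := hlip _ _ _
    _ ≤ L * (∑ s ∈ Finset.Icc 1 T, backProd P T s *ᵥ Pi.single r (2 * L * η s * χ s)) r := by
      gcongr
    _ = _ := by
      simp only [Finset.sum_apply, Finset.mul_sum]
      refine Finset.sum_congr rfl fun s _ => ?_
      rw [mulVec, dotProduct_single]
      ring

/-- local model, convex case, time-varying gossip matrices. -/
theorem dsgd_local_stability_convex
    {H : Type*} [NormedAddCommGroup H] [InnerProductSpace ℝ H]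
    {Z : Type*} (f : Z → H → ℝ) (f' : Z → H → H)
    (L β : ℝ) (hL : 0 < L) (hβ : 0 < β)
    (hdiff : ∀ (z : Z) (x : H), HasFDerivAt (f z) ((innerSL ℝ) (f' z x)) x)
    (hlip : ∀ (z : Z) (x y : H), |f z x - f z y| ≤ L * ‖x - y‖)
    (hgradbd : ∀ (z : Z) (x : H), ‖f' z x‖ ≤ L)
    (hsmooth : ∀ (z : Z) (x y : H), ‖f' z x - f' z y‖ ≤ β * ‖x - y‖)
    (hconv : ∀ z : Z, ConvexOn ℝ Set.univ (f z))
    (m n T : ℕ) (hm : 1 ≤ m) (hn : 1 ≤ n) (hT : 1 ≤ T)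
    (P : ℕ → Matrix (Fin m) (Fin m) ℝ)
    (hPsym : ∀ t, 1 ≤ t → t ≤ T → ∀ i l, P t i l = P t l i)
    (hPpos : ∀ t, 1 ≤ t → t ≤ T → ∀ i l, 0 ≤ P t i l)
    (hProw : ∀ t, 1 ≤ t → t ≤ T → ∀ i, ∑ l, P t i l = 1)
    (r : Fin m) (k : Fin n)
    (S S' : Fin m → Fin n → Z)
    (hSS' : ∀ (r' : Fin m) (k' : Fin n), (r', k') ≠ (r, k) → S' r' k' = S r' k')
    (j : ℕ → Fin m → Fin n)
    (η : ℕ → ℝ) (hηpos : ∀ t, 1 ≤ t → t ≤ T → 0 < η t)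
    (hstep : ∀ t, 1 ≤ t → t ≤ T → ∀ i, 0 < P t i i ∧ η t ≤ 2 * P t i i / β)
    (w₀ : H) (w v : ℕ → Fin m → H)
    (hw1 : ∀ i, w 1 i = w₀) (hv1 : ∀ i, v 1 i = w₀)
    (hwrec : ∀ t, 1 ≤ t → t ≤ T → ∀ i,
      w (t + 1) i = ∑ l, P t i l • w t l - η t • f' (S i (j t i)) (w t i))
    (hvrec : ∀ t, 1 ≤ t → t ≤ T → ∀ i,
      v (t + 1) i = ∑ l, P t i l • v t l - η t • f' (S' i (j t i)) (v t i))
    :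
    ∀ z : Z,
      |f z (w (T + 1) r) - f z (v (T + 1) r)| ≤
        2 * L ^ 2 * ∑ t ∈ Finset.Icc 1 T, (backProd P T t) r r * η t * (if j t r = k then (1 : ℝ) else 0) :=
  dsgd_local_stability_convex_general f f' L β hL hβ hdiff hlip hgradbd hsmooth hconv m n T P hPpos
    r k S S' hSS' j η hηpos hstep w₀ w v hw1 hv1 hwrec hvrec
end
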